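/- In rFPA(alpha) with alpha > 1 and two bidders under uniform bidding, consider an equilibrium. If bidder i satisfies V_i < B_i and there is a query j with v_{i,j} > 0 and 0 < pi_{i,j} < 1, then m_i = 1; in particular b_{i,j'} = v_{i,j'} for every query j'. -/

import Mathlib

open Finset
open scoped Classical

noncomputable section

/-- An allocation: each entry in `[0,1]`, and each query allocated total probability at most 1. -/
def IsAlloc {n q : ℕ} (π : Fin n → Fin q → ℝ) : Prop :=
  (∀ i j, 0 ≤ π i j) ∧ (∀ i j, π i j ≤ 1) ∧ ∀ j, ∑ i, π i j ≤ 1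

/-- An integral (deterministic) allocation. -/
def IsIntegralAlloc {n q : ℕ} (π : Fin n → Fin q → ℝ) : Prop :=
  IsAlloc π ∧ ∀ i j, π i j = 0 ∨ π i j = 1

/-- Liquid welfare of an allocation. -/
def allocLW {n q : ℕ} (B : Fin n → ℝ) (v π : Fin n → Fin q → ℝ) : ℝ :=
  ∑ i, min (B i) (∑ j, π i j * v i j)

/-- Winning probability of a bidder bidding `bi` against an opponent bidding `bo`
in the randomized first-price auction with parameter `α`. -/
def rfpaProb (α bi bo : ℝ) : ℝ :=
  if bi = 0 ∧ bo = 0 then 0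
  else if α * bo ≤ bi then 1
  else if α * bi ≤ bo then 0
  else (1 / 2) * (1 + Real.log (bi / bo) / Real.log α)

/-- Probability that bidder `i` wins query `j` in rFPA(α) with two bidders. -/
def rfpaPi {q : ℕ} (α : ℝ) (b : Fin 2 → Fin q → ℝ) (i : Fin 2) (j : Fin q) : ℝ :=
  rfpaProb α (b i j) (b (i + 1) j)

/-- Expected value of bidder `i` in rFPA(α). -/
def rfpaV {q : ℕ} (α : ℝ) (v b : Fin 2 → Fin q → ℝ) (i : Fin 2) : ℝ :=
  ∑ j, rfpaPi α b i j * v i j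

/-- Expected spend of bidder `i` in rFPA(α). -/
def rfpaSpendI {q : ℕ} (α : ℝ) (b : Fin 2 → Fin q → ℝ) (i : Fin 2) : ℝ :=
  ∑ j, rfpaPi α b i j * b i j

/-- Liquid welfare of a bid profile in rFPA(α). -/
def rfpaLW {q : ℕ} (α : ℝ) (B : Fin 2 → ℝ) (v b : Fin 2 → Fin q → ℝ) : ℝ :=
  ∑ i, min (B i) (rfpaV α v b i)

/-- Undominated (equilibrium) bid profile for rFPA(α) with ROS and budget constraints. -/
def IsRfpaEq {q : ℕ} (α : ℝ) (B : Fin 2 → ℝ) (v b : Fin 2 → Fin q → ℝ) : Prop :=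
  (∀ i j, 0 ≤ b i j) ∧
  (∀ i, rfpaSpendI α b i ≤ min (B i) (rfpaV α v b i)) ∧
  (∀ i (b' : Fin q → ℝ), (∀ j, 0 ≤ b' j) →
    rfpaV α v (Function.update b i b') i ≤ rfpaV α v b i ∨
    min (B i) (rfpaV α v (Function.update b i b') i)
      < rfpaSpendI α (Function.update b i b') i)

/-- The uniform-bidding bid profile induced by multipliers `m`. -/
def uniformBids {n q : ℕ} (v : Fin n → Fin q → ℝ) (m : Fin n → ℝ) : Fin n → Fin q → ℝ :=
  fun i j => m i * v i j

/-- Uniform-bidding equilibrium for rFPA(α): deviations restricted to a different multiplier. -/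
def IsRfpaUniformEq {q : ℕ} (α : ℝ) (B : Fin 2 → ℝ) (v : Fin 2 → Fin q → ℝ)
    (m : Fin 2 → ℝ) : Prop :=
  (∀ i, 0 ≤ m i) ∧
  (∀ i, rfpaSpendI α (uniformBids v m) i ≤ min (B i) (rfpaV α v (uniformBids v m) i)) ∧
  (∀ i (m' : ℝ), 0 ≤ m' →
    rfpaV α v (Function.update (uniformBids v m) i (fun j => m' * v i j)) i
        ≤ rfpaV α v (uniformBids v m) i ∨
    min (B i) (rfpaV α v (Function.update (uniformBids v m) i (fun j => m' * v i j)) i)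
        < rfpaSpendI α (Function.update (uniformBids v m) i (fun j => m' * v i j)) i)

/-! The ROS constraint `m i * V ≤ V` with `V > 0` forces `m i ≤ 1`. If `m i < 1`, a slightly
larger multiplier `μ ≤ 1` is a profitable deviation: on the contested query `j` the winning
probability `½ (1 + log_α (b / b'))`, clamped to `[0, 1]`, strictly increases with the bid, so
the value strictly increases; the value is continuous in the multiplier, so it stays below the
budget; and the spend `μ * V(μ)` stays below `V(μ)` because `μ ≤ 1`. -/

section Clamp

variable {x y : ℝ}

lemma clamp_le_clamp (h : x ≤ y) : max 0 (min 1 x) ≤ max 0 (min 1 y) :=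
  max_le_max le_rfl (min_le_min le_rfl h)

lemma clamp_lt_clamp (h0 : 0 < max 0 (min 1 x)) (h1 : max 0 (min 1 x) < 1) (h : x < y) :
    max 0 (min 1 x) < max 0 (min 1 y) := by
  simp only [min_def, max_def] at *
  split_ifs at * <;> linarith

end Clamp

section WinningProbability

variable {α bi bi' bo : ℝ}

lemma rfpaProb_zero_left (hα : 0 < α) (hbo : 0 ≤ bo) : rfpaProb α 0 bo = 0 := by
  rcases hbo.eq_or_lt with rfl | hbo
  · simp [rfpaProb]
  · simp [rfpaProb, hbo.ne', hbo.le, (mul_pos hα hbo).not_ge]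

lemma rfpaProb_zero_right (hbi : 0 < bi) : rfpaProb α bi 0 = 1 := by
  simp [rfpaProb, hbi.ne', hbi.le]

lemma rfpaProb_eq_clamp (hα : 1 < α) (hbi : 0 < bi) (hbo : 0 < bo) :
    rfpaProb α bi bo = max 0 (min 1 (1 / 2 * (1 + Real.log (bi / bo) / Real.log α))) := by
  have hL : 0 < Real.log α := Real.log_pos hα
  set t := Real.log (bi / bo) / Real.log α
  have hup : α * bo ≤ bi ↔ 1 ≤ t := by
    rw [le_div_iff₀ hL, one_mul, Real.log_le_log_iff (by linarith) (by positivity),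
      le_div_iff₀ hbo, mul_comm]
  have hlow : α * bi ≤ bo ↔ t ≤ -1 := by
    rw [div_le_iff₀ hL, neg_one_mul, ← Real.log_inv,
      Real.log_le_log_iff (by positivity) (by positivity), div_le_iff₀ hbo,
      le_inv_mul_iff₀ (by linarith)]
  unfold rfpaProb
  rw [if_neg fun h => hbi.ne' h.1]
  split_ifs with h1 h2
  · rw [min_eq_left (by linarith [hup.1 h1]), max_eq_right zero_le_one]
  · rw [min_eq_right (by linarith [hlow.1 h2]), max_eq_left (by linarith [hlow.1 h2])]
  · rw [hup, not_le] at h1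
    rw [hlow, not_le] at h2
    rw [min_eq_right (by linarith), max_eq_right (by linarith)]

lemma rfpaProb_nonneg (hα : 1 < α) (hbi : 0 ≤ bi) (hbo : 0 ≤ bo) : 0 ≤ rfpaProb α bi bo := by
  rcases hbi.eq_or_lt with rfl | hbi
  · rw [rfpaProb_zero_left (by linarith) hbo]
  rcases hbo.eq_or_lt with rfl | hbo
  · rw [rfpaProb_zero_right hbi]; exact zero_le_one
  · rw [rfpaProb_eq_clamp hα hbi hbo]; exact le_max_left _ _

lemma rfpaProb_le_rfpaProb_left (hα : 1 < α) (hbi : 0 < bi) (h : bi ≤ bi') (hbo : 0 ≤ bo) :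
    rfpaProb α bi bo ≤ rfpaProb α bi' bo := by
  have hbi' : 0 < bi' := hbi.trans_le h
  rcases hbo.eq_or_lt with rfl | hbo
  · rw [rfpaProb_zero_right hbi, rfpaProb_zero_right hbi']
  rw [rfpaProb_eq_clamp hα hbi hbo, rfpaProb_eq_clamp hα hbi' hbo]
  have := Real.log_pos hα
  exact clamp_le_clamp (by gcongr)

lemma rfpaProb_lt_rfpaProb_left (hα : 1 < α) (hbi : 0 < bi) (h : bi < bi') (hbo : 0 ≤ bo)
    (h0 : 0 < rfpaProb α bi bo) (h1 : rfpaProb α bi bo < 1) :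
    rfpaProb α bi bo < rfpaProb α bi' bo := by
  have hbi' : 0 < bi' := hbi.trans h
  rcases hbo.eq_or_lt with rfl | hbo
  · exact absurd (rfpaProb_zero_right hbi) h1.ne
  rw [rfpaProb_eq_clamp hα hbi hbo] at h0 h1 ⊢
  rw [rfpaProb_eq_clamp hα hbi' hbo]
  have := Real.log_pos hα
  exact clamp_lt_clamp h0 h1 (by gcongr)

lemma continuousAt_rfpaProb_left (hα : 1 < α) (hbi : 0 < bi) (hbo : 0 ≤ bo) :
    ContinuousAt (fun b => rfpaProb α b bo) bi := by
  rcases hbo.eq_or_lt with rfl | hbo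
  · exact continuousAt_const.congr <|
      (eventually_gt_nhds hbi).mono fun b hb => (rfpaProb_zero_right hb).symm
  refine ContinuousAt.congr ?_ <|
    (eventually_gt_nhds hbi).mono fun b hb => (rfpaProb_eq_clamp hα hb hbo).symm
  have : bi / bo ≠ 0 := by positivity
  fun_prop (disch := assumption)

end WinningProbability

section UniformValue

variable {q : ℕ} {α μ μ' : ℝ} {x w : Fin q → ℝ}

def uniformBidValue (α : ℝ) (x w : Fin q → ℝ) (μ : ℝ) : ℝ :=
  ∑ j, rfpaProb α (μ * x j) (w j) * x j

lemma uniformBidValue_pos (hα : 1 < α) (hx : ∀ j, 0 ≤ x j) (hw : ∀ j, 0 ≤ w j) (hμ : 0 ≤ μ)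
    {j : Fin q} (hj : 0 < x j) (h0 : 0 < rfpaProb α (μ * x j) (w j)) :
    0 < uniformBidValue α x w μ :=
  (mul_pos h0 hj).trans_le <| Finset.single_le_sum
    (fun k _ => mul_nonneg (rfpaProb_nonneg hα (mul_nonneg hμ (hx k)) (hw k)) (hx k))
    (Finset.mem_univ j)

lemma uniformBidValue_lt (hα : 1 < α) (hx : ∀ j, 0 ≤ x j) (hw : ∀ j, 0 ≤ w j) (hμ : 0 < μ)
    (hμμ' : μ < μ') {j : Fin q} (hj : 0 < x j) (h0 : 0 < rfpaProb α (μ * x j) (w j))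
    (h1 : rfpaProb α (μ * x j) (w j) < 1) :
    uniformBidValue α x w μ < uniformBidValue α x w μ' := by
  refine Finset.sum_lt_sum (fun k _ => ?_) ⟨j, Finset.mem_univ j, ?_⟩
  · rcases (hx k).eq_or_lt with hk | hk
    · simp [← hk]
    exact mul_le_mul_of_nonneg_right (rfpaProb_le_rfpaProb_left hα (mul_pos hμ hk)
      (by gcongr) (hw k)) hk.le
  · exact mul_lt_mul_of_pos_right (rfpaProb_lt_rfpaProb_left hα (mul_pos hμ hj)
      (by gcongr) (hw j) h0 h1) hj

lemma continuousAt_uniformBidValue (hα : 1 < α) (hx : ∀ j, 0 ≤ x j) (hw : ∀ j, 0 ≤ w j)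
    (hμ : 0 < μ) : ContinuousAt (uniformBidValue α x w) μ := by
  refine tendsto_finsetSum _ fun j _ => ?_
  rcases (hx j).eq_or_lt with hj | hj
  · simp only [← hj, mul_zero]
    exact continuousAt_const
  exact (ContinuousAt.comp (g := fun b => rfpaProb α b (w j)) (f := fun μ => μ * x j)
    (continuousAt_rfpaProb_left hα (mul_pos hμ hj) (hw j))
    (continuousAt_id.mul_const _)).mul_const _

end UniformValue

section UniformDeviation

variable {q : ℕ} {α μ : ℝ} {v b : Fin 2 → Fin q → ℝ} {i : Fin 2}

lemma rfpaPi_update_self (b : Fin 2 → Fin q → ℝ) (i : Fin 2) (b' : Fin q → ℝ) (j : Fin q) :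
    rfpaPi α (Function.update b i b') i j = rfpaProb α (b' j) (b (i + 1) j) := by
  have hne : i + 1 ≠ i := by fin_cases i <;> decide
  simp [rfpaPi, hne]

lemma rfpaV_update_uniform :
    rfpaV α v (Function.update b i fun j => μ * v i j) i
      = uniformBidValue α (v i) (b (i + 1)) μ := by
  simp only [rfpaV, rfpaPi_update_self, uniformBidValue]

lemma rfpaSpendI_update_uniform :
    rfpaSpendI α (Function.update b i fun j => μ * v i j) i
      = μ * uniformBidValue α (v i) (b (i + 1)) μ := by
  simp only [rfpaSpendI, rfpaPi_update_self, Function.update_self, uniformBidValue,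
    Finset.mul_sum]
  exact Finset.sum_congr rfl fun j _ => by ring

lemma rfpaSpendI_uniformBids (m : Fin 2 → ℝ) :
    rfpaSpendI α (uniformBids v m) i
      = m i * uniformBidValue α (v i) (uniformBids v m (i + 1)) (m i) := by
  rw [← rfpaSpendI_update_uniform]
  exact congrArg (rfpaSpendI α · i) (Function.update_eq_self i _).symm

end UniformDeviation

theorem stmt16_general (q : ℕ) (α : ℝ) (hα : 1 < α) (B : Fin 2 → ℝ) (v : Fin 2 → Fin q → ℝ)
    (hv : ∀ i j, 0 ≤ v i j)
    (m : Fin 2 → ℝ) (hm : IsRfpaUniformEq α B v m)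
    (i : Fin 2) (hV : rfpaV α v (uniformBids v m) i < B i)
    (j : Fin q) (hvj : 0 < v i j)
    (h0 : 0 < rfpaPi α (uniformBids v m) i j)
    (h1 : rfpaPi α (uniformBids v m) i j < 1) :
    m i = 1 ∧ ∀ j', uniformBids v m i j' = v i j' := by
  obtain ⟨hm0, hROS, hdev⟩ := hm
  set w := uniformBids v m (i + 1)
  set f := uniformBidValue α (v i) w
  have hw : ∀ j, 0 ≤ w j := fun j => mul_nonneg (hm0 _) (hv _ j)
  have hspend : m i * f (m i) ≤ f (m i) :=
    (rfpaSpendI_uniformBids m).symm.trans_le ((hROS i).trans (min_le_right _ _))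
  change 0 < rfpaProb α (m i * v i j) (w j) at h0
  have hmi : 0 < m i := (hm0 i).lt_of_ne fun h => by
    rw [← h, zero_mul, rfpaProb_zero_left (by linarith) (hw j)] at h0
    exact h0.false
  have hf : 0 < f (m i) := uniformBidValue_pos hα (hv i) hw hmi.le hvj h0
  have hle : m i ≤ 1 := (mul_le_iff_le_one_left hf).1 hspend
  have heq : m i = 1 := by
    refine hle.antisymm (not_lt.1 fun hlt => ?_)
    obtain ⟨μ, hμB, hμ, hμ1⟩ := ((((continuousAt_uniformBidValue hα (hv i) hw hmi).eventually
      (gt_mem_nhds hV)).filter_mono nhdsWithin_le_nhds).and (Ioc_mem_nhdsGT hlt)).exists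
    have hgain : f (m i) < f μ := uniformBidValue_lt hα (hv i) hw hmi hμ hvj h0 h1
    rcases hdev i μ (hmi.le.trans hμ.le) with h | h
    · rw [rfpaV_update_uniform] at h
      exact h.not_gt hgain
    · rw [rfpaV_update_uniform, rfpaSpendI_update_uniform] at h
      have hμspend : μ * f μ ≤ f μ := mul_le_of_le_one_left (hf.trans hgain).le hμ1
      exact h.not_ge (le_min (hμspend.trans hμB.le) hμspend)
  exact ⟨heq, fun j' => by simp [uniformBids, heq]⟩

/-- in rFPA(α) with `α > 1`, two bidders and uniform bidding, in every
equilibrium: if `V i < B i` and some query `j` has `v i j > 0` and `0 < π i j < 1`, then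
`m i = 1`; in particular bidder `i` bids their value everywhere. -/
theorem stmt16 (q : ℕ) (α : ℝ) (hα : 1 < α) (B : Fin 2 → ℝ) (v : Fin 2 → Fin q → ℝ)
    (hB : ∀ i, 0 < B i) (hv : ∀ i j, 0 ≤ v i j)
    (m : Fin 2 → ℝ) (hm : IsRfpaUniformEq α B v m)
    (i : Fin 2) (hV : rfpaV α v (uniformBids v m) i < B i)
    (j : Fin q) (hvj : 0 < v i j)
    (h0 : 0 < rfpaPi α (uniformBids v m) i j)
    (h1 : rfpaPi α (uniformBids v m) i j < 1) :
    m i = 1 ∧ ∀ j', uniformBids v m i j' = v i j' :=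
  stmt16_general q α hα B v hv m hm i hV j hvj h0 h1
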